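/- arXiv:1403.7110 — 2 statements merged into one kernel-verified Lean document; each statement's English description precedes it below -/
import Mathlib

section
/- Let Γ be an infinite group and H a nontrivial group, and form the generalized wreath product G = H^(Γ) ⋊ (Γ × Γ), where H^(Γ) is the direct sum of copies of H indexed by Γ and Γ × Γ acts on the index set Γ by left-right multiplication (a,b)·g = a g b⁻¹. If Γ is i.c.c., then G is i.c.c. -/
/-- The subgroup of `Γ → H` consisting of finitely supported functions:
the restricted direct product `H^(Γ)`. -/
def finSupp (Γ H : Type*) [Group Γ] [Group H] : Subgroup (Γ → H) where
  carrier := {f | (Function.mulSupport f).Finite}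
  one_mem' := by simp [Function.mulSupport_one]
  mul_mem' := fun {f g} hf hg => ((hf.union hg).subset (Function.mulSupport_mul f g))
  inv_mem' := fun {f} hf => by simpa [Function.mulSupport_inv] using hf

/-- The action of `(a,b) ∈ Γ × Γ` on `H^(Γ)` induced by the left-right multiplication
action `(a,b) · g = a g b⁻¹` on the index set `Γ`: `((a,b) · f) g = f (a⁻¹ g b)`. -/
def lrAut (Γ H : Type*) [Group Γ] [Group H] (p : Γ × Γ) :
    finSupp Γ H ≃* finSupp Γ H where
  toFun f := ⟨fun g => (f : Γ → H) (p.1⁻¹ * g * p.2), by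
    refine Set.Finite.subset ((f.2).image (fun g => p.1 * g * p.2⁻¹)) ?_
    intro g hg
    exact ⟨p.1⁻¹ * g * p.2, hg, by group⟩⟩
  invFun f := ⟨fun g => (f : Γ → H) (p.1 * g * p.2⁻¹), by
    refine Set.Finite.subset ((f.2).image (fun g => p.1⁻¹ * g * p.2)) ?_
    intro g hg
    exact ⟨p.1 * g * p.2⁻¹, hg, by group⟩⟩
  left_inv f := Subtype.ext (funext fun g => by
    show (f : Γ → H) (p.1⁻¹ * (p.1 * g * p.2⁻¹) * p.2) = (f : Γ → H) g
    rw [show p.1⁻¹ * (p.1 * g * p.2⁻¹) * p.2 = g by group])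
  right_inv f := Subtype.ext (funext fun g => by
    show (f : Γ → H) (p.1 * (p.1⁻¹ * g * p.2) * p.2⁻¹) = (f : Γ → H) g
    rw [show p.1 * (p.1⁻¹ * g * p.2) * p.2⁻¹ = g by group])
  map_mul' f g := rfl

/-- The homomorphism `(Γ × Γ) →* MulAut (H^(Γ))` giving the generalized Bernoulli
action of `Γ × Γ` on `H^(Γ)` by left-right translation of the index set. -/
def lrPhi (Γ H : Type*) [Group Γ] [Group H] : (Γ × Γ) →* MulAut (finSupp Γ H) where
  toFun p := lrAut Γ H p
  map_one' := MulEquiv.ext fun f => Subtype.ext (funext fun g => by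
    simp [lrAut])
  map_mul' p q := MulEquiv.ext fun f => Subtype.ext (funext fun g => by
    show (f : Γ → H) ((p.1 * q.1)⁻¹ * g * (p.2 * q.2)) =
      (f : Γ → H) (q.1⁻¹ * (p.1⁻¹ * g * p.2) * q.2)
    rw [show (p.1 * q.1)⁻¹ * g * (p.2 * q.2) = q.1⁻¹ * (p.1⁻¹ * g * p.2) * q.2 by group])


lemma infinite_range_of_finite_fibers {α β : Type*} [Infinite α] (F : α → β)
    (h : ∀ y, (F ⁻¹' {y}).Finite) : (Set.range F).Infinite := by
  intro hfin
  have hu : (Set.univ : Set α).Finite := by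
    have h2 := hfin.biUnion (fun y _ => h y)
    refine h2.subset fun a _ => ?_
    exact Set.mem_biUnion ⟨a, rfl⟩ rfl
  exact Set.infinite_univ hu

/-- If `Γ` is an infinite i.c.c. group and `H` is a nontrivial group, then the
left-right wreath product `G = H^(Γ) ⋊ (Γ × Γ)` is i.c.c. -/
theorem leftRight_wreath_product_icc (Γ H : Type*) [Group Γ] [Group H] [Infinite Γ]
    (hicc : ∀ g : Γ, g ≠ 1 → ({x : Γ | ∃ h : Γ, h * g * h⁻¹ = x}).Infinite)
    (hH : ∃ h : H, h ≠ 1) :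
    Infinite (SemidirectProduct (finSupp Γ H) (Γ × Γ) (lrPhi Γ H)) ∧
      ∀ x : SemidirectProduct (finSupp Γ H) (Γ × Γ) (lrPhi Γ H), x ≠ 1 →
        ({y | ∃ r, r * x * r⁻¹ = y} :
          Set (SemidirectProduct (finSupp Γ H) (Γ × Γ) (lrPhi Γ H))).Infinite := by
  obtain ⟨h0, hh0⟩ := hH
  refine ⟨Infinite.of_injective _ SemidirectProduct.inr_injective, ?_⟩
  intro x hx
  by_cases hp : x.right = 1
  · -- translation part trivial; x = inl x.left with x.left ≠ 1
    have hf : x.left ≠ 1 := by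
      intro hl
      exact hx (SemidirectProduct.ext (by simp [hl]) (by simp [hp]))
    have hxeq : x = SemidirectProduct.inl x.left :=
      SemidirectProduct.ext (by simp) (by simp [hp])
    obtain ⟨g0, hg0⟩ : ∃ g, (x.left : Γ → H) g ≠ 1 := by
      by_contra hcon
      push_neg at hcon
      exact hf (Subtype.ext (funext fun g => hcon g))
    set F : Γ → SemidirectProduct (finSupp Γ H) (Γ × Γ) (lrPhi Γ H) :=
      fun c => SemidirectProduct.inl ((lrPhi Γ H (c, 1)) x.left) with hF
    have hrange : Set.range F ⊆ {y | ∃ r, r * x * r⁻¹ = y} := by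
      rintro _ ⟨c, rfl⟩
      refine ⟨SemidirectProduct.inr (c, 1), ?_⟩
      conv_lhs => rw [hxeq]
      rw [← map_inv]
      exact (SemidirectProduct.inl_aut _ _).symm
    refine Set.Infinite.mono hrange ?_
    apply infinite_range_of_finite_fibers
    intro y
    rcases Set.eq_empty_or_nonempty (F ⁻¹' {y}) with he | ⟨c', hc'⟩
    · rw [he]; exact Set.finite_empty
    · have key : ∀ c, F c = F c' → (x.left : Γ → H) (c'⁻¹ * c * g0) ≠ 1 := by
        intro c hcc
        have h3 := SemidirectProduct.inl_injective hcc
        have h4 := congrFun (congrArg (Subtype.val) h3) (c * g0)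
        have h5 : (x.left : Γ → H) (c⁻¹ * (c * g0) * 1) =
            (x.left : Γ → H) (c'⁻¹ * (c * g0) * 1) := h4
        rw [show c⁻¹ * (c * g0) * 1 = g0 by group,
          show c'⁻¹ * (c * g0) * 1 = c'⁻¹ * c * g0 by group] at h5
        rw [← h5]; exact hg0
      have hsub : F ⁻¹' {y} ⊆
          (fun c => c'⁻¹ * c * g0) ⁻¹' (Function.mulSupport (x.left : Γ → H)) := by
        intro c hc
        exact key c ((Set.eq_of_mem_singleton hc).trans (Set.eq_of_mem_singleton hc').symm)
      refine Set.Finite.subset (Set.Finite.preimage ?_ x.left.2) hsub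
      have : Function.Injective (fun c : Γ => c'⁻¹ * c * g0) := by
        intro a b hab
        simp only at hab
        exact mul_left_cancel (mul_right_cancel hab)
      exact this.injOn
  · -- translation part nontrivial; project via rightHom
    have hne : x.right.1 ≠ 1 ∨ x.right.2 ≠ 1 := by
      by_contra hcon
      push_neg at hcon
      exact hp (Prod.ext_iff.mpr ⟨hcon.1, hcon.2⟩)
    have hclass : ({q : Γ × Γ | ∃ r : Γ × Γ, r * x.right * r⁻¹ = q}).Infinite := by
      rcases hne with ha | hb
      · have hinj : Function.Injective (fun t : Γ => ((t, x.right.2) : Γ × Γ)) := by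
          intro a b hab; exact (Prod.ext_iff.mp hab).1
        refine Set.Infinite.mono ?_ ((hicc x.right.1 ha).image hinj.injOn)
        rintro _ ⟨t, ⟨c, rfl⟩, rfl⟩
        refine ⟨(c, 1), ?_⟩
        simp [Prod.ext_iff]
      · have hinj : Function.Injective (fun t : Γ => ((x.right.1, t) : Γ × Γ)) := by
          intro a b hab; exact (Prod.ext_iff.mp hab).2
        refine Set.Infinite.mono ?_ ((hicc x.right.2 hb).image hinj.injOn)
        rintro _ ⟨t, ⟨c, rfl⟩, rfl⟩
        refine ⟨(1, c), ?_⟩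
        simp [Prod.ext_iff]
    have him : {q : Γ × Γ | ∃ r, r * x.right * r⁻¹ = q} ⊆
        SemidirectProduct.rightHom '' {y | ∃ r, r * x * r⁻¹ = y} := by
      rintro _ ⟨r, rfl⟩
      refine ⟨SemidirectProduct.inr r * x * (SemidirectProduct.inr r)⁻¹, ⟨_, rfl⟩, ?_⟩
      simp [map_mul, map_inv, SemidirectProduct.rightHom_inr,
        SemidirectProduct.rightHom_eq_right]
    exact Set.Infinite.of_image _ (hclass.mono him)
end

section
/- Let Γ be a group, Σ ≤ Γ a subgroup and θ : Σ → Γ an injective group homomorphism, and let G = HNN(Γ, Σ, θ) be the corresponding HNN extension with stable letter t. If the HNN extension is non-degenerate (Σ ≠ Γ and θ(Σ) ≠ Γ), then G contains a subgroup isomorphic to the free group on two generators. -/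
/-!
Since no group is the union of two proper subgroups, there is `g ∉ A ∪ B`. Write `x i` for the
conjugate `c i * t * (c i)⁻¹`, where `c 0 = 1` and `c 1 = g`. A reduced word
`x i₁ ^ e₁ ⋯ x iₙ ^ eₙ` is the HNN word `c i₁ * t ^ e₁ * ((c i₁)⁻¹ * c i₂) * ⋯ * t ^ eₙ * (c iₙ)⁻¹`.
Between two consecutive `t`s stands either `1`, when the same generator repeats and hence with
the same exponent, or `g ^ (± 1) ∉ A ∪ B`; so the HNN word has no pinch, and by Britton's lemma
it is not `1` unless it is empty.
-/

theorem Subgroup.exists_notMem_and_notMem {G : Type*} [Group G] {H K : Subgroup G}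
    (hH : H ≠ ⊤) (hK : K ≠ ⊤) : ∃ g, g ∉ H ∧ g ∉ K := by
  obtain ⟨a, -, ha⟩ := SetLike.exists_of_lt hH.lt_top
  obtain ⟨b, -, hb⟩ := SetLike.exists_of_lt hK.lt_top
  by_cases haK : a ∈ K
  · by_cases hbH : b ∈ H
    · exact ⟨a * b, by rwa [H.mul_mem_cancel_right hbH], by rwa [K.mul_mem_cancel_left haK]⟩
    · exact ⟨b, hbH, hb⟩
  · exact ⟨a, ha, haK⟩

namespace HNNExtension

open NormalWord

variable {G : Type*} [Group G] {A B : Subgroup G} {ι : Type*} (c : ι → G)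

def conjHead : List (ι × Bool) → G
  | [] => 1
  | p :: _ => c p.1

def conjLetters : List (ι × Bool) → List (ℤˣ × G)
  | [] => []
  | p :: L => (if p.2 then 1 else -1, (c p.1)⁻¹ * conjHead c L) :: conjLetters L

theorem conjHead_mul_prod_conjLetters (φ : A ≃* B) (L : List (ι × Bool)) :
    of (conjHead c L) * ((conjLetters c L).map
        fun x => (t : HNNExtension G A B φ) ^ (x.1 : ℤ) * of x.2).prod =
      FreeGroup.lift (fun i => of (c i) * t * (of (c i))⁻¹) (FreeGroup.mk L) := by
  rw [FreeGroup.lift_mk]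
  induction L with
  | nil => simp [conjHead, conjLetters]
  | cons p L ih =>
    rw [conjLetters, conjHead, List.map_cons, List.map_cons, List.prod_cons, List.prod_cons, ← ih]
    cases p.2 <;> simp [mul_assoc, zpow_neg]

variable {c}

theorem isChain_conjLetters (hc : ∀ i j, i ≠ j → ∀ u, (c i)⁻¹ * c j ∉ toSubgroup A B u) :
    ∀ {L : List (ι × Bool)}, FreeGroup.IsReduced L →
      (conjLetters c L).IsChain fun a b => a.2 ∈ toSubgroup A B a.1 → a.1 = b.1
  | [], _ | [_], _ => by simp [conjLetters]
  | (i, b) :: (j, b') :: L, hL => by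
    rw [FreeGroup.isReduced_cons_cons] at hL
    rw [conjLetters, conjLetters, List.isChain_cons_cons]
    refine ⟨fun hmem => ?_, isChain_conjLetters hc hL.2⟩
    by_cases hij : i = j
    · simp [show b = b' from hL.1 hij]
    · exact absurd hmem (hc i j hij _)

theorem lift_conj_t_injective (φ : A ≃* B)
    (hc : ∀ i j, i ≠ j → ∀ u, (c i)⁻¹ * c j ∉ toSubgroup A B u) :
    Function.Injective (FreeGroup.lift fun i => (of (c i) * t * (of (c i))⁻¹ :
      HNNExtension G A B φ)) := by
  classical
  refine (injective_iff_map_eq_one _).2 fun x hx => ?_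
  let w : ReducedWord G A B :=
    ⟨conjHead c x.toWord, conjLetters c x.toWord,
      isChain_conjLetters hc FreeGroup.isReduced_toWord⟩
  have hw : w.prod φ = 1 := by
    rw [ReducedWord.prod, conjHead_mul_prod_conjLetters, FreeGroup.mk_toWord, hx]
  -- Britton's lemma
  have hnil : conjLetters c x.toWord = [] :=
    ReducedWord.toList_eq_nil_of_mem_of_range φ w (hw ▸ one_mem _)
  rw [← FreeGroup.toWord_eq_nil_iff]
  cases h : x.toWord <;> simp_all [conjLetters]

end HNNExtension

open HNNExtension in
/-- A non-degenerate HNN extension (both associated subgroups proper) contains a copy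
of the free group on two generators. -/
theorem hnn_extension_contains_free_group
    (G : Type*) [Group G] (A B : Subgroup G) (φ : A ≃* B)
    (hA : A ≠ ⊤) (hB : B ≠ ⊤) :
    ∃ F : Subgroup (HNNExtension G A B φ), Nonempty (FreeGroup (Fin 2) ≃* F) := by
  obtain ⟨g, hgA, hgB⟩ := Subgroup.exists_notMem_and_notMem hA hB
  have hg : ∀ u : ℤˣ, g ∉ toSubgroup A B u := by
    intro u
    rcases Int.units_eq_one_or u with rfl | rfl
    exacts [hgA, hgB]
  have hc : ∀ i j : Fin 2, i ≠ j → ∀ u, (![1, g] i)⁻¹ * ![1, g] j ∉ toSubgroup A B u := by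
    intro i j hij u
    fin_cases i <;> fin_cases j <;> simp_all [inv_mem_iff]
  exact ⟨_, ⟨MonoidHom.ofInjective (lift_conj_t_injective φ hc)⟩⟩
end
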